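/- arXiv:1708.06322 — 2 statements merged into one kernel-verified Lean document; each statement's English description precedes it below -/
import Mathlib

section
/- Let φ : ℝ → ℝ be smooth and 2π-periodic and let u ∈ 𝓗 be smooth. Then, integrating by parts, ⟨A_φ u, u⟩ = -‖u_xx‖² - 2 ∫₀^{2π} φ_xx u u_xx dx + ∫₀^{2π} φ_xx (u_x)² dx. -/
open MeasureTheory Real Filter

/-- The L² norm on [0,2π]. -/
noncomputable def L2norm (f : ℝ → ℝ) : ℝ :=
  Real.sqrt (∫ x in (0:ℝ)..(2*Real.pi), (f x)^2)

/-- The L² inner product on [0,2π]. -/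
noncomputable def L2inner (f g : ℝ → ℝ) : ℝ :=
  ∫ x in (0:ℝ)..(2*Real.pi), f x * g x

/-- The supremum norm on [0,2π]. -/
noncomputable def supNorm (f : ℝ → ℝ) : ℝ :=
  sSup ((fun x => |f x|) '' Set.Icc (0:ℝ) (2*Real.pi))

/-- The operator A_φ u = -∂_x⁴ u - 2 ∂_x³ (φ_x u). -/
noncomputable def Aop (φ u : ℝ → ℝ) : ℝ → ℝ :=
  fun x => -(iteratedDeriv 4 u x) - 2 * iteratedDeriv 3 (fun y => deriv φ y * u y) x

/-- Membership in 𝓗 (smooth part): smooth, 2π-periodic, zero mean on [0,2π]. -/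
def InH (u : ℝ → ℝ) : Prop :=
  ContDiff ℝ (⊤ : ℕ∞) u ∧ Function.Periodic u (2*Real.pi) ∧
    (∫ x in (0:ℝ)..(2*Real.pi), u x) = 0

/-- Membership in H_n: real trigonometric polynomials spanned by e^{ikx}, 1 ≤ |k| ≤ n. -/
def InHn (n : ℕ) (p : ℝ → ℝ) : Prop :=
  ∃ a b : ℕ → ℝ,
    p = fun x => ∑ k ∈ Finset.Icc 1 n, (a k * Real.cos (k*x) + b k * Real.sin (k*x))

/-- λ_n(φ) = sup { ⟨A_φ p, p⟩ : p ∈ H_n, ‖p‖ = 1 }. -/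
noncomputable def lamN (n : ℕ) (φ : ℝ → ℝ) : ℝ :=
  sSup {r : ℝ | ∃ p : ℝ → ℝ, InHn n p ∧ L2norm p = 1 ∧ r = L2inner (Aop φ p) p}

/-- λ(φ) = sup { ⟨A_φ u, u⟩ : u smooth in 𝓗, ‖u‖ = 1 }. -/
noncomputable def lam (φ : ℝ → ℝ) : ℝ :=
  sSup {r : ℝ | ∃ u : ℝ → ℝ, InH u ∧ L2norm u = 1 ∧ r = L2inner (Aop φ u) u}

/-- All Fourier coefficients ĉ_k of q vanish for |k| ≤ n. -/
def HighModes (n : ℕ) (q : ℝ → ℝ) : Prop :=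
  ∀ k : ℤ, |k| ≤ (n : ℤ) →
    (∫ x in (0:ℝ)..(2*Real.pi), (q x : ℂ) * Complex.exp (-Complex.I * (k:ℂ) * (x:ℂ))) = 0

lemma per_deriv {f : ℝ → ℝ} {c : ℝ} (h : Function.Periodic f c) :
    Function.Periodic (deriv f) c := fun x => by
  have : (fun y => f (y + c)) = f := funext fun y => h y
  rw [← deriv_comp_add_const f c x, this]

lemma sd {f : ℝ → ℝ} (h : ContDiff ℝ (⊤ : ℕ∞) f) : ContDiff ℝ (⊤ : ℕ∞) (deriv f) := by
  have h2 : ContDiff ℝ (((⊤ : ℕ∞) : WithTop ℕ∞) + 1) f := h.of_le (by exact_mod_cast le_top)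
  exact (contDiff_succ_iff_deriv.mp h2).2.2

lemma ibp {f g : ℝ → ℝ} (hf : ContDiff ℝ (⊤ : ℕ∞) f) (hg : ContDiff ℝ (⊤ : ℕ∞) g)
    (hfp : Function.Periodic f (2*Real.pi)) (hgp : Function.Periodic g (2*Real.pi)) :
    ∫ x in (0:ℝ)..(2*Real.pi), deriv f x * g x
      = -∫ x in (0:ℝ)..(2*Real.pi), f x * deriv g x := by
  have h := intervalIntegral.integral_deriv_mul_eq_sub
    (u := f) (v := g) (u' := deriv f) (v' := deriv g) (a := 0) (b := 2*Real.pi)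
    (fun x _ => ((hf.differentiable (by simp)) x).hasDerivAt)
    (fun x _ => ((hg.differentiable (by simp)) x).hasDerivAt)
    ((hf.continuous_deriv (by simp)).intervalIntegrable _ _)
    ((hg.continuous_deriv (by simp)).intervalIntegrable _ _)
  have hb : f (2*Real.pi) * g (2*Real.pi) - f 0 * g 0 = 0 := by
    have h1 : f (2*Real.pi) = f 0 := by simpa using hfp 0
    have h2 : g (2*Real.pi) = g 0 := by simpa using hgp 0
    rw [h1, h2, sub_self]
  rw [hb] at h
  have hsplit : (∫ x in (0:ℝ)..(2*Real.pi), deriv f x * g x + f x * deriv g x)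
      = (∫ x in (0:ℝ)..(2*Real.pi), deriv f x * g x)
        + ∫ x in (0:ℝ)..(2*Real.pi), f x * deriv g x := by
    apply intervalIntegral.integral_add
    · exact (((hf.continuous_deriv (by simp)).mul hg.continuous)).intervalIntegrable _ _
    · exact ((hf.continuous.mul (hg.continuous_deriv (by simp)))).intervalIntegrable _ _
  rw [hsplit] at h
  linarith

/-- ⟨A_φ u, u⟩ = -‖u_xx‖² - 2∫ φ_xx u u_xx + ∫ φ_xx (u_x)². -/
theorem stmt1 (φ : ℝ → ℝ) (hφ : ContDiff ℝ (⊤ : ℕ∞) φ) (hφp : Function.Periodic φ (2*Real.pi))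
    (u : ℝ → ℝ) (hu : InH u) :
    L2inner (Aop φ u) u = -(L2norm (iteratedDeriv 2 u))^2
        - 2 * (∫ x in (0:ℝ)..(2*Real.pi), iteratedDeriv 2 φ x * u x * iteratedDeriv 2 u x)
        + (∫ x in (0:ℝ)..(2*Real.pi), iteratedDeriv 2 φ x * (deriv u x)^2) := by
  obtain ⟨hus, hup, -⟩ := hu
  set D1 := deriv u with hD1
  set D2 := deriv D1 with hD2
  set D3 := deriv D2 with hD3
  set v : ℝ → ℝ := fun y => deriv φ y * u y with hv
  set Dv := deriv v with hDv
  set D2v := deriv Dv with hD2v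
  -- smoothness
  have hsD1 : ContDiff ℝ (⊤ : ℕ∞) D1 := sd hus
  have hsD2 : ContDiff ℝ (⊤ : ℕ∞) D2 := sd hsD1
  have hsD3 : ContDiff ℝ (⊤ : ℕ∞) D3 := sd hsD2
  have hsφ1 : ContDiff ℝ (⊤ : ℕ∞) (deriv φ) := sd hφ
  have hsv : ContDiff ℝ (⊤ : ℕ∞) v := hsφ1.mul hus
  have hsDv : ContDiff ℝ (⊤ : ℕ∞) Dv := sd hsv
  have hsD2v : ContDiff ℝ (⊤ : ℕ∞) D2v := sd hsDv
  -- periodicity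
  have hpD1 : Function.Periodic D1 (2*Real.pi) := per_deriv hup
  have hpD2 : Function.Periodic D2 (2*Real.pi) := per_deriv hpD1
  have hpD3 : Function.Periodic D3 (2*Real.pi) := per_deriv hpD2
  have hpφ1 : Function.Periodic (deriv φ) (2*Real.pi) := per_deriv hφp
  have hpv : Function.Periodic v (2*Real.pi) := hpφ1.mul hup
  have hpDv : Function.Periodic Dv (2*Real.pi) := per_deriv hpv
  have hpD2v : Function.Periodic D2v (2*Real.pi) := per_deriv hpDv
  -- iterated derivatives
  have hit2u : iteratedDeriv 2 u = D2 := by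
    simp only [iteratedDeriv_succ, iteratedDeriv_zero]; rfl
  have hit4u : iteratedDeriv 4 u = deriv D3 := by
    simp only [iteratedDeriv_succ, iteratedDeriv_zero]; rfl
  have hit3v : iteratedDeriv 3 v = deriv D2v := by
    simp only [iteratedDeriv_succ, iteratedDeriv_zero]; rfl
  have hit2φ : iteratedDeriv 2 φ = deriv (deriv φ) := by
    simp only [iteratedDeriv_succ, iteratedDeriv_zero]
  -- Step A
  have stepA : (∫ x in (0:ℝ)..(2*Real.pi), deriv D3 x * u x)
      = ∫ x in (0:ℝ)..(2*Real.pi), (D2 x)^2 := by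
    rw [ibp hsD3 hus hpD3 hup, ← hD1, hD3, ibp hsD2 hsD1 hpD2 hpD1, ← hD2, neg_neg]
    congr 1; funext x; ring
  -- Step B
  have stepB : (∫ x in (0:ℝ)..(2*Real.pi), deriv D2v x * u x)
      = ∫ x in (0:ℝ)..(2*Real.pi), Dv x * D2 x := by
    rw [ibp hsD2v hus hpD2v hup, ← hD1, hD2v, ibp hsDv hsD1 hpDv hpD1, ← hD2, neg_neg]
  -- product rule for Dv
  have hDvx : ∀ x, Dv x = deriv (deriv φ) x * u x + deriv φ x * D1 x := by
    intro x
    rw [hDv, hv]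
    exact deriv_fun_mul ((hsφ1.differentiable (by simp)) x) ((hus.differentiable (by simp)) x)
  -- Step C
  have stepC : (∫ x in (0:ℝ)..(2*Real.pi), Dv x * D2 x)
      = (∫ x in (0:ℝ)..(2*Real.pi), deriv (deriv φ) x * u x * D2 x)
        + ∫ x in (0:ℝ)..(2*Real.pi), deriv φ x * (D1 x * D2 x) := by
    rw [← intervalIntegral.integral_add]
    · apply intervalIntegral.integral_congr
      intro x _
      show Dv x * D2 x = deriv (deriv φ) x * u x * D2 x + deriv φ x * (D1 x * D2 x)
      rw [hDvx x]; ring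
    · exact (((sd hsφ1).continuous.mul hus.continuous).mul hsD2.continuous).intervalIntegrable _ _
    · exact (hsφ1.continuous.mul (hsD1.continuous.mul hsD2.continuous)).intervalIntegrable _ _
  -- Step D
  have hg : ContDiff ℝ (⊤ : ℕ∞) (fun x => (D1 x)^2) := hsD1.pow 2
  have hgp : Function.Periodic (fun x => (D1 x)^2) (2*Real.pi) := fun x => by
    simp [hpD1 x]
  have hgd : ∀ x, deriv (fun x => (D1 x)^2) x = 2 * (D1 x * D2 x) := by
    intro x
    have hh : HasDerivAt (fun x => (D1 x)^2) ((2:ℕ) * D1 x ^ 1 * D2 x) x :=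
      ((hsD1.differentiable (by simp)) x).hasDerivAt.pow 2
    rw [hh.deriv]; push_cast; ring
  have stepD : (∫ x in (0:ℝ)..(2*Real.pi), deriv (deriv φ) x * (D1 x)^2)
      = -(2 * ∫ x in (0:ℝ)..(2*Real.pi), deriv φ x * (D1 x * D2 x)) := by
    rw [ibp hsφ1 hg hpφ1 hgp, ← intervalIntegral.integral_const_mul]
    congr 1
    apply intervalIntegral.integral_congr
    intro x _
    show deriv φ x * deriv (fun x => (D1 x)^2) x = 2 * (deriv φ x * (D1 x * D2 x))
    rw [hgd x]; ring
  -- split the main integral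
  have hsplit : L2inner (Aop φ u) u
      = -(∫ x in (0:ℝ)..(2*Real.pi), deriv D3 x * u x)
        - 2 * ∫ x in (0:ℝ)..(2*Real.pi), deriv D2v x * u x := by
    rw [L2inner]
    have heq : Set.EqOn (fun x => Aop φ u x * u x)
        (fun x => -(deriv D3 x * u x) - 2 * (deriv D2v x * u x)) (Set.uIcc (0:ℝ) (2*Real.pi)) := by
      intro x _
      show Aop φ u x * u x = -(deriv D3 x * u x) - 2 * (deriv D2v x * u x)
      rw [Aop, ← hv, hit4u, hit3v]
      ring
    rw [intervalIntegral.integral_congr heq]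
    rw [intervalIntegral.integral_sub, intervalIntegral.integral_neg,
      intervalIntegral.integral_const_mul]
    · exact (((sd hsD3).continuous.mul hus.continuous).neg).intervalIntegrable _ _
    · exact ((continuous_const.mul ((sd hsD2v).continuous.mul hus.continuous))).intervalIntegrable _ _
  -- norm squared
  have hnorm : (L2norm (iteratedDeriv 2 u))^2 = ∫ x in (0:ℝ)..(2*Real.pi), (D2 x)^2 := by
    rw [L2norm, hit2u, Real.sq_sqrt]
    exact intervalIntegral.integral_nonneg (by positivity) (fun x _ => sq_nonneg _)
  rw [hsplit, stepA, stepB, stepC, hnorm, hit2φ, hit2u]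
  linarith [stepD]
end

section
/- Let φ be a smooth 2π-periodic function, n ≥ 1, p ∈ H_n, and let q be a smooth 2π-periodic function with zero mean whose Fourier coefficients vanish for |k| ≤ n. Then ⟨A_φ p, q⟩ ≤ (2‖φ_xxx‖_∞ + 4‖φ_xx‖_∞ + 2‖φ_x‖_∞) · (1/n) · ‖q_xx‖ · ‖p_xx‖. -/
open MeasureTheory Real Filter

/-! ### Auxiliary lemmas -/

section Aux

open Set intervalIntegral

lemma two_pi_pos' : (0:ℝ) < 2*Real.pi := by positivity

/-- Fourier coefficient on [0, 2π]. -/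
noncomputable def fcoef (f : ℝ → ℂ) (k : ℤ) : ℂ := fourierCoeffOn two_pi_pos' f k

lemma parseval_sum (f : ℝ → ℂ) (hf : Continuous f) (hper : f 0 = f (2*Real.pi)) :
    Summable (fun k : ℤ => ‖fcoef f k‖^2) ∧
    (2*Real.pi) * ∑' k : ℤ, ‖fcoef f k‖^2 = ∫ x in (0:ℝ)..(2*Real.pi), ‖f x‖^2 := by
  set T := 2*Real.pi with hT
  haveI : Fact (0 < T) := ⟨two_pi_pos'⟩
  have hper' : f 0 = f (0 + T) := by rw [zero_add]; exact hper
  have hcont : ContinuousOn f (Icc 0 (0+T)) := hf.continuousOn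
  set F : C(AddCircle T, ℂ) := ⟨AddCircle.liftIco T 0 f,
    AddCircle.liftIco_continuous hper' hcont⟩ with hF
  have hFapp : ∀ x : ℝ, x ∈ Set.Icc 0 T → F (x : AddCircle T) = f x := by
    intro x hx
    rcases lt_or_eq_of_le hx.2 with h | h
    · exact AddCircle.liftIco_coe_apply (by simpa using ⟨hx.1, h⟩)
    · have : (x : AddCircle T) = ((0:ℝ) : AddCircle T) := by
        rw [h]; simpa using AddCircle.coe_add_period T 0
      rw [this]
      have h0 : F ((0:ℝ) : AddCircle T) = f 0 :=
        AddCircle.liftIco_coe_apply (by simp [Fact.out (p := 0 < T)])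
      rw [h0, hper, h, hT]
  have hcoeff : ∀ k : ℤ, fourierCoeff (F : AddCircle T → ℂ) k = fcoef f k := by
    intro k
    have := fourierCoeff_liftIco_eq (T := T) (a := 0) f k
    simp only [zero_add] at this
    rw [hF]; exact this
  set Flp := ContinuousMap.toLp (E := ℂ) 2 AddCircle.haarAddCircle ℂ F with hFlp
  have hcoeff2 : ∀ k : ℤ, fourierCoeff (Flp : AddCircle T → ℂ) k = fcoef f k := by
    intro k; rw [hFlp, fourierCoeff_toLp]; exact hcoeff k
  have hsummable : Summable (fun k : ℤ => ‖fcoef f k‖^2) := by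
    have hm : Memℓp (fun k => (fourierBasis.repr Flp) k) 2 := lp.memℓp _
    have := (memℓp_gen_iff (p := 2) (by norm_num)).mp hm
    have h2 : ∀ k : ℤ, ‖(fourierBasis.repr Flp) k‖ ^ (ENNReal.toReal 2) = ‖fcoef f k‖^2 := by
      intro k
      rw [fourierBasis_repr, hcoeff2]
      norm_num [Real.rpow_natCast]
    exact this.congr h2
  refine ⟨hsummable, ?_⟩
  have hpars := tsum_sq_fourierCoeff Flp
  simp_rw [hcoeff2] at hpars
  rw [hpars]
  have hvol : ∫ t : AddCircle T, ‖Flp t‖^2 ∂AddCircle.haarAddCircle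
      = ∫ t : AddCircle T, ‖F t‖^2 ∂AddCircle.haarAddCircle := by
    apply MeasureTheory.integral_congr_ae
    filter_upwards [ContinuousMap.coeFn_toLp (p := 2) (μ := AddCircle.haarAddCircle) (𝕜 := ℂ) F]
      with t ht
    rw [hFlp, ht]
  rw [hvol]
  have hint : ∫ t : AddCircle T, ‖F t‖^2
      = T * ∫ t : AddCircle T, ‖F t‖^2 ∂AddCircle.haarAddCircle := by
    rw [AddCircle.volume_eq_smul_haarAddCircle, MeasureTheory.integral_smul_measure,
      ENNReal.toReal_ofReal (Fact.out (p := 0 < T)).le, smul_eq_mul]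
  rw [← hint]
  rw [← AddCircle.intervalIntegral_preimage T 0 (fun z => ‖F z‖^2)]
  rw [zero_add]
  apply intervalIntegral.integral_congr
  intro x hx
  rw [Set.uIcc_of_le (Fact.out (p := 0 < T)).le] at hx
  simp only [hFapp x hx]

lemma fcoef_deriv (f f' : ℝ → ℂ) (hder : ∀ x, HasDerivAt f (f' x) x)
    (hf' : Continuous f') (hper : f 0 = f (2*Real.pi)) (k : ℤ) (hk : k ≠ 0) :
    fcoef f' k = Complex.I * k * fcoef f k := by
  have h := fourierCoeffOn_of_hasDerivAt two_pi_pos' hk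
    (fun x _ => hder x) (hf'.intervalIntegrable _ _)
  rw [← hper] at h
  simp only [sub_self, mul_zero, zero_sub] at h
  have hfc : fcoef f k = fourierCoeffOn two_pi_pos' f k := rfl
  have hfc' : fcoef f' k = fourierCoeffOn two_pi_pos' f' k := rfl
  rw [← hfc, ← hfc'] at h
  have hπ : (Real.pi : ℂ) ≠ 0 := Complex.ofReal_ne_zero.mpr Real.pi_ne_zero
  have hkne : (k : ℂ) ≠ 0 := Int.cast_ne_zero.mpr hk
  have hI := Complex.I_ne_zero
  field_simp at h
  have h2π : (2*(Real.pi:ℂ)) ≠ 0 := by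
    simp [hπ]
  apply mul_left_cancel₀ h2π
  push_cast at h
  linear_combination -h

lemma fcoef_zero (f : ℝ → ℂ) (hint : (∫ x in (0:ℝ)..(2*Real.pi), f x) = 0) :
    fcoef f 0 = 0 := by
  rw [fcoef, fourierCoeffOn_eq_integral]
  simp only [neg_zero, fourier_zero, one_smul, sub_zero]
  rw [hint, smul_zero]

lemma spec_ineq (c : ℕ) (hc : 1 ≤ c) (f f' : ℝ → ℝ)
    (hder : ∀ x, HasDerivAt f (f' x) x) (hf : Continuous f) (hf' : Continuous f')
    (hper : f 0 = f (2*Real.pi)) (hper' : f' 0 = f' (2*Real.pi))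
    (hvan : ∀ k : ℤ, |k| < (c:ℤ) → fcoef (fun x => (f x : ℂ)) k = 0) :
    (c:ℝ)^2 * ∫ x in (0:ℝ)..(2*Real.pi), (f x)^2 ≤ ∫ x in (0:ℝ)..(2*Real.pi), (f' x)^2 := by
  set g : ℝ → ℂ := fun x => (f x : ℂ) with hg
  set g' : ℝ → ℂ := fun x => (f' x : ℂ) with hg'
  have hderc : ∀ x, HasDerivAt g (g' x) x := fun x => (hder x).ofReal_comp
  have hgc : Continuous g := Complex.continuous_ofReal.comp hf
  have hgc' : Continuous g' := Complex.continuous_ofReal.comp hf'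
  have hgper : g 0 = g (2*Real.pi) := by simp [hg, hper]
  have P1 := parseval_sum g hgc hgper
  have P2 := parseval_sum g' hgc' (by simp [hg', hper'])
  have hdrel : ∀ k : ℤ, (c:ℝ)^2 * ‖fcoef g k‖^2 ≤ ‖fcoef g' k‖^2 := by
    intro k
    rcases lt_or_ge (|k|) (c:ℤ) with h | h
    · rw [hvan k h]
      simp
    · have hk0 : k ≠ 0 := by
        intro hk; rw [hk] at h; simp at h; omega
      have he : ‖fcoef g' k‖^2 = (k:ℝ)^2 * ‖fcoef g k‖^2 := by
        rw [fcoef_deriv g g' hderc hgc' hgper k hk0]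
        rw [norm_mul, norm_mul]
        simp [mul_pow, sq_abs]
      rw [he]
      have h1 : (c:ℝ) ≤ |(k:ℝ)| := by exact_mod_cast h
      have hc0 : (0:ℝ) ≤ (c:ℝ) := Nat.cast_nonneg c
      have habs : |(k:ℝ)|^2 = (k:ℝ)^2 := sq_abs _
      have hn : (0:ℝ) ≤ ‖fcoef g k‖^2 := by positivity
      have hck : (c:ℝ)^2 ≤ (k:ℝ)^2 := by nlinarith [abs_nonneg (k:ℝ)]
      nlinarith
  have hsum1 := P1.1
  have hsum2 := P2.1
  have htsum : (c:ℝ)^2 * ∑' k : ℤ, ‖fcoef g k‖^2 ≤ ∑' k : ℤ, ‖fcoef g' k‖^2 := by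
    rw [← tsum_mul_left]
    exact Summable.tsum_le_tsum hdrel (hsum1.mul_left _) hsum2
  have hint1 : (∫ x in (0:ℝ)..(2*Real.pi), ‖g x‖^2) = ∫ x in (0:ℝ)..(2*Real.pi), (f x)^2 := by
    apply intervalIntegral.integral_congr
    intro x _
    simp [hg, Complex.norm_real, sq_abs]
  have hint2 : (∫ x in (0:ℝ)..(2*Real.pi), ‖g' x‖^2) = ∫ x in (0:ℝ)..(2*Real.pi), (f' x)^2 := by
    apply intervalIntegral.integral_congr
    intro x _
    simp [hg', Complex.norm_real, sq_abs]
  rw [← hint1, ← hint2, ← P1.2, ← P2.2]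
  calc (c:ℝ)^2 * (2*Real.pi * ∑' k : ℤ, ‖fcoef g k‖^2)
      = 2*Real.pi * ((c:ℝ)^2 * ∑' k : ℤ, ‖fcoef g k‖^2) := by ring
    _ ≤ 2*Real.pi * ∑' k : ℤ, ‖fcoef g' k‖^2 := by
        apply mul_le_mul_of_nonneg_left htsum (by positivity)

lemma periodic_deriv'' {f : ℝ → ℝ} (hf : Function.Periodic f (2*Real.pi)) :
    Function.Periodic (deriv f) (2*Real.pi) := by
  intro x
  have h1 : (fun y => f (y + 2*Real.pi)) = f := funext fun y => hf y
  have := deriv_comp_add_const f (2*Real.pi) x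
  rw [h1] at this
  exact this.symm

lemma periodic_iteratedDeriv {f : ℝ → ℝ} (hf : Function.Periodic f (2*Real.pi)) (m : ℕ) :
    Function.Periodic (iteratedDeriv m f) (2*Real.pi) := by
  induction m with
  | zero => simpa using hf
  | succ k ih => rw [iteratedDeriv_succ]; exact periodic_deriv'' ih

noncomputable def trig (n : ℕ) (a b : ℕ → ℝ) : ℝ → ℝ :=
  fun x => ∑ k ∈ Finset.Icc 1 n, (a k * Real.cos (k*x) + b k * Real.sin (k*x))

lemma trig_continuous (n : ℕ) (a b : ℕ → ℝ) : Continuous (trig n a b) := by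
  apply continuous_finset_sum
  intro k _
  fun_prop

lemma trig_hasDerivAt (n : ℕ) (a b : ℕ → ℝ) (x : ℝ) :
    HasDerivAt (trig n a b) (trig n (fun k => (k:ℝ) * b k) (fun k => -((k:ℝ) * a k)) x) x := by
  have h : ∀ k ∈ Finset.Icc 1 n, HasDerivAt
      (fun x => a k * Real.cos (k*x) + b k * Real.sin (k*x))
      ((k:ℝ) * b k * Real.cos (k*x) + (-((k:ℝ) * a k)) * Real.sin (k*x)) x := by
    intro k _
    have hk : HasDerivAt (fun x : ℝ => (k:ℝ) * x) (k:ℝ) x := by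
      simpa using (hasDerivAt_id x).const_mul (k:ℝ)
    have hc : HasDerivAt (fun x => Real.cos ((k:ℝ)*x)) (-Real.sin ((k:ℝ)*x) * (k:ℝ)) x :=
      (Real.hasDerivAt_cos ((k:ℝ)*x)).comp x hk
    have hs : HasDerivAt (fun x => Real.sin ((k:ℝ)*x)) (Real.cos ((k:ℝ)*x) * (k:ℝ)) x :=
      (Real.hasDerivAt_sin ((k:ℝ)*x)).comp x hk
    have := ((hc.const_mul (a k)).add (hs.const_mul (b k)))
    refine this.congr_deriv ?_
    ring
  have := HasDerivAt.fun_sum h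
  exact this

lemma trig_periodic (n : ℕ) (a b : ℕ → ℝ) : Function.Periodic (trig n a b) (2*Real.pi) := by
  intro x
  unfold trig
  apply Finset.sum_congr rfl
  intro k _
  have h1 : (k:ℝ) * (x + 2*Real.pi) = (k:ℝ)*x + (k:ℤ) * (2*Real.pi) := by push_cast; ring
  rw [h1, Real.cos_add_int_mul_two_pi, Real.sin_add_int_mul_two_pi]

lemma trig_integral_zero (n : ℕ) (a b : ℕ → ℝ) :
    (∫ x in (0:ℝ)..(2*Real.pi), trig n a b x) = 0 := by
  unfold trig
  rw [intervalIntegral.integral_finset_sum]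
  · apply Finset.sum_eq_zero
    intro k hk
    have hk1 : 1 ≤ k := (Finset.mem_Icc.mp hk).1
    have hkne : (k:ℝ) ≠ 0 := by positivity
    rw [intervalIntegral.integral_add
        (by apply Continuous.intervalIntegrable; fun_prop)
        (by apply Continuous.intervalIntegrable; fun_prop)]
    rw [intervalIntegral.integral_const_mul, intervalIntegral.integral_const_mul]
    rw [intervalIntegral.integral_comp_mul_left (fun y => Real.cos y) hkne,
      intervalIntegral.integral_comp_mul_left (fun y => Real.sin y) hkne]
    rw [integral_cos, integral_sin]
    have h2 : Real.sin ((k:ℝ) * (2*Real.pi)) = 0 := by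
      have : (k:ℝ) * (2*Real.pi) = (2*k : ℕ) * Real.pi := by push_cast; ring
      rw [this, Real.sin_nat_mul_pi]
    have h3 : Real.cos ((k:ℝ) * (2*Real.pi)) = 1 := Real.cos_nat_mul_two_pi k
    simp [h2, h3]
  · intro k _
    apply Continuous.intervalIntegrable
    fun_prop

lemma highmode_orth (n : ℕ) (k : ℕ) (hk : k ≤ n) (q : ℝ → ℝ) (hqc : Continuous q)
    (hhigh : HighModes n q) :
    (∫ x in (0:ℝ)..(2*Real.pi), Real.cos (k*x) * q x) = 0 ∧
    (∫ x in (0:ℝ)..(2*Real.pi), Real.sin (k*x) * q x) = 0 := by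
  have E := hhigh k (by simp; exact_mod_cast hk)
  have hpt : ∀ x:ℝ, (q x:ℂ) * Complex.exp (-Complex.I * (k:ℕ) * x)
      = ((Real.cos (k*x) * q x : ℝ):ℂ) + ((-(Real.sin (k*x) * q x) : ℝ):ℂ) * Complex.I := by
    intro x
    have h1 : -Complex.I * (k:ℕ) * (x:ℝ) = ((-((k:ℝ)*x) : ℝ):ℂ) * Complex.I := by
      push_cast; ring
    rw [h1, Complex.exp_mul_I]
    rw [← Complex.ofReal_cos, ← Complex.ofReal_sin, Real.cos_neg, Real.sin_neg]
    push_cast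
    ring
  push_cast at E
  rw [intervalIntegral.integral_congr (fun x _ => hpt x)] at E
  rw [intervalIntegral.integral_add (by apply Continuous.intervalIntegrable; fun_prop)
    (by apply Continuous.intervalIntegrable; fun_prop)] at E
  rw [intervalIntegral.integral_mul_const] at E
  rw [intervalIntegral.integral_ofReal, intervalIntegral.integral_ofReal] at E
  rw [Complex.ext_iff] at E
  simp at E
  exact E

lemma trig_orth (n : ℕ) (a b : ℕ → ℝ) (q : ℝ → ℝ) (hqc : Continuous q)
    (hhigh : HighModes n q) :
    (∫ x in (0:ℝ)..(2*Real.pi), trig n a b x * q x) = 0 := by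
  unfold trig
  have hcongr : ∀ x ∈ Set.uIcc (0:ℝ) (2*Real.pi),
      (∑ k ∈ Finset.Icc 1 n, (a k * Real.cos (k*x) + b k * Real.sin (k*x))) * q x
      = ∑ k ∈ Finset.Icc 1 n, (a k * (Real.cos (k*x) * q x) + b k * (Real.sin (k*x) * q x)) := by
    intro x _
    rw [Finset.sum_mul]
    apply Finset.sum_congr rfl
    intro k _
    ring
  rw [intervalIntegral.integral_congr hcongr]
  rw [intervalIntegral.integral_finset_sum
    (fun k _ => by apply Continuous.intervalIntegrable; fun_prop)]
  apply Finset.sum_eq_zero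
  intro k hk
  obtain ⟨h1, h2⟩ := highmode_orth n k (Finset.mem_Icc.mp hk).2 q hqc hhigh
  rw [intervalIntegral.integral_add (by apply Continuous.intervalIntegrable; fun_prop)
    (by apply Continuous.intervalIntegrable; fun_prop),
    intervalIntegral.integral_const_mul, intervalIntegral.integral_const_mul, h1, h2]
  simp

lemma L2norm_nonneg (f : ℝ → ℝ) : 0 ≤ L2norm f := Real.sqrt_nonneg _

lemma supNorm_bddAbove (f : ℝ → ℝ) (hf : Continuous f) :
    BddAbove ((fun x => |f x|) '' Set.Icc (0:ℝ) (2*Real.pi)) :=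
  (isCompact_Icc.image (by fun_prop)).bddAbove

lemma le_supNorm (f : ℝ → ℝ) (hf : Continuous f) {x : ℝ}
    (hx : x ∈ Set.Icc (0:ℝ) (2*Real.pi)) : |f x| ≤ supNorm f :=
  le_csSup (supNorm_bddAbove f hf) ⟨x, hx, rfl⟩

lemma supNorm_nonneg (f : ℝ → ℝ) (hf : Continuous f) : 0 ≤ supNorm f :=
  le_trans (abs_nonneg _) (le_supNorm f hf ⟨le_refl 0, by positivity⟩)

lemma cauchy_schwarz (f g : ℝ → ℝ) (hf : Continuous f) (hg : Continuous g) :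
    (∫ x in (0:ℝ)..(2*Real.pi), f x * g x) ≤ L2norm f * L2norm g := by
  set A := ∫ x in (0:ℝ)..(2*Real.pi), (f x)^2 with hA
  set B := ∫ x in (0:ℝ)..(2*Real.pi), f x * g x with hB
  set C := ∫ x in (0:ℝ)..(2*Real.pi), (g x)^2 with hC
  have hA0 : 0 ≤ A := intervalIntegral.integral_nonneg (by positivity) (fun x _ => by positivity)
  have hC0 : 0 ≤ C := intervalIntegral.integral_nonneg (by positivity) (fun x _ => by positivity)
  have key : ∀ t : ℝ, 0 ≤ A*t^2 + 2*B*t + C := by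
    intro t
    have h1 : (∫ x in (0:ℝ)..(2*Real.pi), (t * f x + g x)^2) = A*t^2 + 2*B*t + C := by
      have h2 : ∀ x, (t * f x + g x)^2 = t^2 * (f x)^2 + (2*t) * (f x * g x) + (g x)^2 := by
        intro x; ring
      rw [intervalIntegral.integral_congr (fun x _ => h2 x)]
      rw [intervalIntegral.integral_add (by apply Continuous.intervalIntegrable; fun_prop)
        (by apply Continuous.intervalIntegrable; fun_prop),
        intervalIntegral.integral_add (by apply Continuous.intervalIntegrable; fun_prop)
        (by apply Continuous.intervalIntegrable; fun_prop)]
      rw [intervalIntegral.integral_const_mul, intervalIntegral.integral_const_mul]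
      rw [← hA, ← hB, ← hC]
      ring
    rw [← h1]
    exact intervalIntegral.integral_nonneg (by positivity) (fun x _ => by positivity)
  have hdisc : discrim A (2*B) C ≤ 0 :=
    discrim_le_zero (by intro t; have := key t; nlinarith [sq_nonneg t])
  rw [discrim] at hdisc
  have hB2 : B^2 ≤ A * C := by nlinarith
  calc B ≤ |B| := le_abs_self B
    _ = Real.sqrt (B^2) := (Real.sqrt_sq_eq_abs B).symm
    _ ≤ Real.sqrt (A * C) := Real.sqrt_le_sqrt hB2
    _ = Real.sqrt A * Real.sqrt C := Real.sqrt_mul hA0 _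
    _ = L2norm f * L2norm g := by
      rw [L2norm, L2norm, hA, hC]

lemma L2norm_abs (u : ℝ → ℝ) : L2norm (fun x => |u x|) = L2norm u := by
  unfold L2norm
  congr 1
  apply intervalIntegral.integral_congr
  intro x _
  simp [sq_abs]

lemma triple_bound (h u v : ℝ → ℝ) (hh : Continuous h) (hu : Continuous u)
    (hv : Continuous v) :
    (∫ x in (0:ℝ)..(2*Real.pi), h x * u x * v x) ≤ supNorm h * (L2norm u * L2norm v) := by
  have hM0 : 0 ≤ supNorm h := supNorm_nonneg h hh
  have step1 : (∫ x in (0:ℝ)..(2*Real.pi), h x * u x * v x)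
      ≤ ∫ x in (0:ℝ)..(2*Real.pi), supNorm h * (|u x| * |v x|) := by
    apply intervalIntegral.integral_mono_on two_pi_pos'.le
      (by apply Continuous.intervalIntegrable; fun_prop)
      (by apply Continuous.intervalIntegrable; fun_prop)
    intro x hx
    have h1 : h x * u x * v x ≤ |h x * u x * v x| := le_abs_self _
    have h2 : |h x * u x * v x| = |h x| * (|u x| * |v x|) := by
      rw [abs_mul, abs_mul]; ring
    have h3 : |h x| ≤ supNorm h := le_supNorm h hh hx
    have h4 : (0:ℝ) ≤ |u x| * |v x| := by positivity
    nlinarith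
  have step2 : (∫ x in (0:ℝ)..(2*Real.pi), supNorm h * (|u x| * |v x|))
      = supNorm h * ∫ x in (0:ℝ)..(2*Real.pi), |u x| * |v x| :=
    intervalIntegral.integral_const_mul _ _
  have step3 : (∫ x in (0:ℝ)..(2*Real.pi), |u x| * |v x|)
      ≤ L2norm u * L2norm v := by
    have := cauchy_schwarz (fun x => |u x|) (fun x => |v x|) (by fun_prop) (by fun_prop)
    rwa [L2norm_abs, L2norm_abs] at this
  calc (∫ x in (0:ℝ)..(2*Real.pi), h x * u x * v x)
      ≤ ∫ x in (0:ℝ)..(2*Real.pi), supNorm h * (|u x| * |v x|) := step1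
    _ = supNorm h * ∫ x in (0:ℝ)..(2*Real.pi), |u x| * |v x| := step2
    _ ≤ supNorm h * (L2norm u * L2norm v) := by
        apply mul_le_mul_of_nonneg_left step3 hM0

lemma one_le_inf : (1 : WithTop ℕ∞) ≤ ((⊤:ℕ∞) : WithTop ℕ∞) := by exact_mod_cast le_top

lemma smooth_parts {f : ℝ → ℝ} (hf : ContDiff ℝ ((⊤:ℕ∞) : WithTop ℕ∞) f) (m : ℕ) :
    Continuous (iteratedDeriv m f) ∧
    (∀ x, HasDerivAt (iteratedDeriv m f) (iteratedDeriv (m+1) f x) x) := by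
  have h1 : ContDiff ℝ ((⊤:ℕ∞) : WithTop ℕ∞) (iteratedDeriv m f) := by
    rw [iteratedDeriv_eq_iterate]; exact ContDiff.iterate_deriv m hf
  refine ⟨h1.continuous, fun x => ?_⟩
  have hd := ((h1.differentiable (by simp)).differentiableAt (x := x)).hasDerivAt
  rw [iteratedDeriv_succ]
  exact hd

lemma trig_contDiff (n : ℕ) (a b : ℕ → ℝ) :
    ContDiff ℝ ((⊤:ℕ∞) : WithTop ℕ∞) (trig n a b) := by
  apply ContDiff.sum
  intro k _
  apply ContDiff.add
  · exact contDiff_const.mul (Real.contDiff_cos.comp (contDiff_const.mul contDiff_id))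
  · exact contDiff_const.mul (Real.contDiff_sin.comp (contDiff_const.mul contDiff_id))

lemma fcoef_eq_exp_integral (f : ℝ → ℝ) (k : ℤ) :
    fcoef (fun x => (f x : ℂ)) k = (1/(2*Real.pi) : ℂ) *
      ∫ x in (0:ℝ)..(2*Real.pi), (f x:ℂ) * Complex.exp (-Complex.I * (k:ℂ) * (x:ℂ)) := by
  rw [fcoef, fourierCoeffOn_eq_integral]
  have hpt : ∀ x : ℝ, (fourier (-k) (x : AddCircle (2*Real.pi - 0))) • ((f x:ℝ):ℂ)
      = (f x:ℂ) * Complex.exp (-Complex.I * (k:ℂ) * (x:ℂ)) := by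
    intro x
    rw [fourier_coe_apply, smul_eq_mul]
    rw [mul_comm]
    congr 1
    congr 1
    have hπ : (Real.pi : ℂ) ≠ 0 := Complex.ofReal_ne_zero.mpr Real.pi_ne_zero
    push_cast
    field_simp
    ring
  rw [intervalIntegral.integral_congr (fun x _ => hpt x)]
  norm_num

noncomputable def da (a b : ℕ → ℝ) : ℕ → ℝ := fun k => (k:ℝ) * b k
noncomputable def db (a b : ℕ → ℝ) : ℕ → ℝ := fun k => -((k:ℝ) * a k)

lemma trig_hasDerivAt' (n : ℕ) (a b : ℕ → ℝ) (x : ℝ) :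
    HasDerivAt (trig n a b) (trig n (da a b) (db a b) x) x := trig_hasDerivAt n a b x

lemma per_ends {f : ℝ → ℝ} (h : Function.Periodic f (2*Real.pi)) : f 0 = f (2*Real.pi) := by
  have := h 0; rw [zero_add] at this; exact this.symm

end Aux

set_option maxHeartbeats 2000000 in
/-- first mixed-term estimate:
⟨A_φ p, q⟩ ≤ (2‖φ_xxx‖_∞ + 4‖φ_xx‖_∞ + 2‖φ_x‖_∞)·(1/n)·‖q_xx‖·‖p_xx‖. -/
theorem stmt9 (φ : ℝ → ℝ) (hφ : ContDiff ℝ (⊤ : ℕ∞) φ) (hφp : Function.Periodic φ (2*Real.pi))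
    (n : ℕ) (hn : 1 ≤ n) (p : ℝ → ℝ) (hp : InHn n p)
    (q : ℝ → ℝ) (hq : ContDiff ℝ (⊤ : ℕ∞) q) (hqp : Function.Periodic q (2*Real.pi))
    (hmean : (∫ x in (0:ℝ)..(2*Real.pi), q x) = 0)
    (hhigh : HighModes n q) :
    L2inner (Aop φ p) q ≤
      (2 * supNorm (iteratedDeriv 3 φ) + 4 * supNorm (iteratedDeriv 2 φ)
        + 2 * supNorm (deriv φ))
      * (1/(n:ℝ)) * L2norm (iteratedDeriv 2 q) * L2norm (iteratedDeriv 2 p) := by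
  obtain ⟨a, b, hpab⟩ := hp
  have hptrig : p = trig n a b := hpab
  set A1 : ℕ → ℝ := da a b with hA1
  set B1 : ℕ → ℝ := db a b with hB1
  set A2 : ℕ → ℝ := da A1 B1 with hA2
  set B2 : ℕ → ℝ := db A1 B1 with hB2
  set A3 : ℕ → ℝ := da A2 B2 with hA3
  set B3 : ℕ → ℝ := db A2 B2 with hB3
  set A4 : ℕ → ℝ := da A3 B3 with hA4
  set B4 : ℕ → ℝ := db A3 B3 with hB4
  set P1 : ℝ → ℝ := trig n A1 B1 with hP1
  set P2 : ℝ → ℝ := trig n A2 B2 with hP2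
  set P3 : ℝ → ℝ := trig n A3 B3 with hP3
  set P4 : ℝ → ℝ := trig n A4 B4 with hP4
  have hdp : ∀ x, HasDerivAt p (P1 x) x := by
    intro x; rw [hptrig]; exact trig_hasDerivAt' n a b x
  have hdP1 : ∀ x, HasDerivAt P1 (P2 x) x := fun x => trig_hasDerivAt' n A1 B1 x
  have hdP2 : ∀ x, HasDerivAt P2 (P3 x) x := fun x => trig_hasDerivAt' n A2 B2 x
  have hdP3 : ∀ x, HasDerivAt P3 (P4 x) x := fun x => trig_hasDerivAt' n A3 B3 x
  have hcp : Continuous p := by rw [hptrig]; exact trig_continuous n a b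
  have hcP1 : Continuous P1 := trig_continuous n A1 B1
  have hcP2 : Continuous P2 := trig_continuous n A2 B2
  have hcP3 : Continuous P3 := trig_continuous n A3 B3
  have hcP4 : Continuous P4 := trig_continuous n A4 B4
  have hperp : p 0 = p (2*Real.pi) := by rw [hptrig]; exact per_ends (trig_periodic n a b)
  have hperP1 : P1 0 = P1 (2*Real.pi) := per_ends (trig_periodic n A1 B1)
  have hperP2 : P2 0 = P2 (2*Real.pi) := per_ends (trig_periodic n A2 B2)
  have hperP3 : P3 0 = P3 (2*Real.pi) := per_ends (trig_periodic n A3 B3)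
  have hz_p : (∫ x in (0:ℝ)..(2*Real.pi), p x) = 0 := by
    rw [hptrig]; exact trig_integral_zero n a b
  have hz_P1 : (∫ x in (0:ℝ)..(2*Real.pi), P1 x) = 0 := trig_integral_zero n A1 B1
  have e1 : deriv p = P1 := funext fun x => (hdp x).deriv
  have e2 : deriv P1 = P2 := funext fun x => (hdP1 x).deriv
  have e3 : deriv P2 = P3 := funext fun x => (hdP2 x).deriv
  have e4 : deriv P3 = P4 := funext fun x => (hdP3 x).deriv
  have i2p : iteratedDeriv 2 p = P2 := by
    rw [show (2:ℕ) = 1+1 from rfl, iteratedDeriv_succ, iteratedDeriv_one, e1, e2]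
  have i4p : iteratedDeriv 4 p = P4 := by
    rw [show (4:ℕ) = 3+1 from rfl, iteratedDeriv_succ,
        show (3:ℕ) = 2+1 from rfl, iteratedDeriv_succ,
        show (2:ℕ) = 1+1 from rfl, iteratedDeriv_succ, iteratedDeriv_one, e1, e2, e3, e4]
  -- φ facts
  have hφi : ContDiff ℝ ((⊤:ℕ∞) : WithTop ℕ∞) φ := hφ.of_le (by simp)
  have hφ1c : Continuous (deriv φ) := by
    have := (smooth_parts hφi 1).1; rwa [iteratedDeriv_one] at this
  have hφ2c : Continuous (iteratedDeriv 2 φ) := (smooth_parts hφi 2).1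
  have hφ3c : Continuous (iteratedDeriv 3 φ) := (smooth_parts hφi 3).1
  have hφ4c : Continuous (iteratedDeriv 4 φ) := (smooth_parts hφi 4).1
  have hdφ1 : ∀ x, HasDerivAt (deriv φ) (iteratedDeriv 2 φ x) x := by
    have := (smooth_parts hφi 1).2; rwa [iteratedDeriv_one] at this
  have hdφ2 : ∀ x, HasDerivAt (iteratedDeriv 2 φ) (iteratedDeriv 3 φ x) x :=
    (smooth_parts hφi 2).2
  have hdφ3 : ∀ x, HasDerivAt (iteratedDeriv 3 φ) (iteratedDeriv 4 φ x) x :=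
    (smooth_parts hφi 3).2
  have hperφ1 : deriv φ 0 = deriv φ (2*Real.pi) := per_ends (periodic_deriv'' hφp)
  have hperφ2 : iteratedDeriv 2 φ 0 = iteratedDeriv 2 φ (2*Real.pi) :=
    per_ends (periodic_iteratedDeriv hφp 2)
  have hperφ3 : iteratedDeriv 3 φ 0 = iteratedDeriv 3 φ (2*Real.pi) :=
    per_ends (periodic_iteratedDeriv hφp 3)
  -- q facts
  have hqi : ContDiff ℝ ((⊤:ℕ∞) : WithTop ℕ∞) q := hq.of_le (by simp)
  have hqc : Continuous q := hq.continuous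
  have hq1c : Continuous (deriv q) := by
    have := (smooth_parts hqi 1).1; rwa [iteratedDeriv_one] at this
  have hq2c : Continuous (iteratedDeriv 2 q) := (smooth_parts hqi 2).1
  have hdq : ∀ x, HasDerivAt q (deriv q x) x := by
    have := (smooth_parts hqi 0).2
    rwa [iteratedDeriv_zero, show (0+1:ℕ) = 1 from rfl, iteratedDeriv_one] at this
  have hdq1 : ∀ x, HasDerivAt (deriv q) (iteratedDeriv 2 q x) x := by
    have := (smooth_parts hqi 1).2; rwa [iteratedDeriv_one] at this
  have hperq : q 0 = q (2*Real.pi) := per_ends hqp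
  have hperq1 : deriv q 0 = deriv q (2*Real.pi) := per_ends (periodic_deriv'' hqp)
  have hperq2 : iteratedDeriv 2 q 0 = iteratedDeriv 2 q (2*Real.pi) :=
    per_ends (periodic_iteratedDeriv hqp 2)
  -- the product function and its derivatives
  set G1 : ℝ → ℝ := fun x => iteratedDeriv 2 φ x * p x + deriv φ x * P1 x with hG1
  set G2 : ℝ → ℝ := fun x => iteratedDeriv 3 φ x * p x + 2*(iteratedDeriv 2 φ x * P1 x)
    + deriv φ x * P2 x with hG2
  set G3 : ℝ → ℝ := fun x => iteratedDeriv 4 φ x * p x + 3*(iteratedDeriv 3 φ x * P1 x)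
    + 3*(iteratedDeriv 2 φ x * P2 x) + deriv φ x * P3 x with hG3
  have hdg : ∀ x, HasDerivAt (fun y => deriv φ y * p y) (G1 x) x :=
    fun x => (hdφ1 x).mul (hdp x)
  have hdG1 : ∀ x, HasDerivAt G1 (G2 x) x := by
    intro x
    have h := ((hdφ2 x).mul (hdp x)).add ((hdφ1 x).mul (hdP1 x))
    have hval : G2 x = (iteratedDeriv 3 φ x * p x + iteratedDeriv 2 φ x * P1 x)
        + (iteratedDeriv 2 φ x * P1 x + deriv φ x * P2 x) := by
      simp only [hG2]; ring
    rw [hval]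
    exact h
  have hdG2 : ∀ x, HasDerivAt G2 (G3 x) x := by
    intro x
    have h := (((hdφ3 x).mul (hdp x)).add (((hdφ2 x).mul (hdP1 x)).const_mul 2)).add
      ((hdφ1 x).mul (hdP2 x))
    have hval : G3 x = ((iteratedDeriv 4 φ x * p x + iteratedDeriv 3 φ x * P1 x)
        + 2*(iteratedDeriv 3 φ x * P1 x + iteratedDeriv 2 φ x * P2 x))
        + (iteratedDeriv 2 φ x * P2 x + deriv φ x * P3 x) := by
      simp only [hG3]; ring
    rw [hval]
    exact h
  have ig1 : deriv (fun y => deriv φ y * p y) = G1 := funext fun x => (hdg x).deriv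
  have ig2 : iteratedDeriv 2 (fun y => deriv φ y * p y) = G2 := by
    rw [show (2:ℕ) = 1+1 from rfl, iteratedDeriv_succ, iteratedDeriv_one, ig1]
    exact funext fun x => (hdG1 x).deriv
  have ig3 : iteratedDeriv 3 (fun y => deriv φ y * p y) = G3 := by
    rw [show (3:ℕ) = 2+1 from rfl, iteratedDeriv_succ, ig2]
    exact funext fun x => (hdG2 x).deriv
  have hcG2 : Continuous G2 := by
    rw [hG2]
    exact ((hφ3c.mul hcp).add (continuous_const.mul (hφ2c.mul hcP1))).add (hφ1c.mul hcP2)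
  have hcG3 : Continuous G3 := by
    rw [hG3]
    exact (((hφ4c.mul hcp).add (continuous_const.mul (hφ3c.mul hcP1))).add
      (continuous_const.mul (hφ2c.mul hcP2))).add (hφ1c.mul hcP3)
  have hperG2 : G2 0 = G2 (2*Real.pi) := by
    simp only [hG2]
    rw [hperφ3, hperφ2, hperφ1, hperp, hperP1, hperP2]
  -- split the inner product
  have hsplit : L2inner (Aop φ p) q
      = -(∫ x in (0:ℝ)..(2*Real.pi), P4 x * q x)
        - 2 * ∫ x in (0:ℝ)..(2*Real.pi), G3 x * q x := by
    unfold L2inner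
    have hpt : ∀ x ∈ Set.uIcc (0:ℝ) (2*Real.pi),
        Aop φ p x * q x = -(P4 x * q x) - 2*(G3 x * q x) := by
      intro x _
      simp only [Aop, i4p, ig3]
      ring
    rw [intervalIntegral.integral_congr hpt]
    rw [intervalIntegral.integral_sub
      (by apply Continuous.intervalIntegrable; exact (hcP4.mul hqc).neg)
      (by apply Continuous.intervalIntegrable; exact continuous_const.mul (hcG3.mul hqc))]
    rw [intervalIntegral.integral_neg, intervalIntegral.integral_const_mul]
  have horth : (∫ x in (0:ℝ)..(2*Real.pi), P4 x * q x) = 0 := by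
    rw [hP4]; exact trig_orth n A4 B4 q hqc hhigh
  have hparts : (∫ x in (0:ℝ)..(2*Real.pi), G3 x * q x)
      = - ∫ x in (0:ℝ)..(2*Real.pi), G2 x * deriv q x := by
    have h := intervalIntegral.integral_deriv_mul_eq_sub (a := 0) (b := 2*Real.pi)
      (u := G2) (v := q) (u' := G3) (v' := deriv q)
      (fun x _ => hdG2 x) (fun x _ => hdq x)
      (hcG3.intervalIntegrable _ _) (hq1c.intervalIntegrable _ _)
    rw [← hperG2, ← hperq] at h
    rw [intervalIntegral.integral_add
      (by apply Continuous.intervalIntegrable; exact hcG3.mul hqc)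
      (by apply Continuous.intervalIntegrable; exact hcG2.mul hq1c)] at h
    have h2 : G2 0 * q 0 - G2 0 * q 0 = 0 := sub_self _
    linarith [h]
  have hLHS : L2inner (Aop φ p) q = 2 * ∫ x in (0:ℝ)..(2*Real.pi), G2 x * deriv q x := by
    rw [hsplit, horth, hparts]; ring
  have hsplit2 : (∫ x in (0:ℝ)..(2*Real.pi), G2 x * deriv q x)
      = (∫ x in (0:ℝ)..(2*Real.pi), iteratedDeriv 3 φ x * p x * deriv q x)
        + 2*(∫ x in (0:ℝ)..(2*Real.pi), iteratedDeriv 2 φ x * P1 x * deriv q x)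
        + (∫ x in (0:ℝ)..(2*Real.pi), deriv φ x * P2 x * deriv q x) := by
    have hpt : ∀ x ∈ Set.uIcc (0:ℝ) (2*Real.pi),
        G2 x * deriv q x = (iteratedDeriv 3 φ x * p x * deriv q x
          + 2*(iteratedDeriv 2 φ x * P1 x * deriv q x))
          + deriv φ x * P2 x * deriv q x := by
      intro x _
      simp only [hG2]; ring
    rw [intervalIntegral.integral_congr hpt]
    rw [intervalIntegral.integral_add
      (by apply Continuous.intervalIntegrable
          exact ((hφ3c.mul hcp).mul hq1c).add
            (continuous_const.mul ((hφ2c.mul hcP1).mul hq1c)))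
      (by apply Continuous.intervalIntegrable; exact (hφ1c.mul hcP2).mul hq1c)]
    rw [intervalIntegral.integral_add
      (by apply Continuous.intervalIntegrable; exact (hφ3c.mul hcp).mul hq1c)
      (by apply Continuous.intervalIntegrable
          exact continuous_const.mul ((hφ2c.mul hcP1).mul hq1c))]
    rw [intervalIntegral.integral_const_mul]
  -- pointwise bounds
  have T1 := triple_bound (iteratedDeriv 3 φ) p (deriv q) hφ3c hcp hq1c
  have T2 := triple_bound (iteratedDeriv 2 φ) P1 (deriv q) hφ2c hcP1 hq1c
  have T3 := triple_bound (deriv φ) P2 (deriv q) hφ1c hcP2 hq1c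
  -- spectral inequalities
  have hvan_p : ∀ k : ℤ, |k| < (1:ℤ) → fcoef (fun x => (p x : ℂ)) k = 0 := by
    intro k hk
    have hk0 : k = 0 := by rw [abs_lt] at hk; omega
    rw [hk0]
    apply fcoef_zero
    rw [intervalIntegral.integral_ofReal, hz_p, Complex.ofReal_zero]
  have hvan_P1 : ∀ k : ℤ, |k| < (1:ℤ) → fcoef (fun x => (P1 x : ℂ)) k = 0 := by
    intro k hk
    have hk0 : k = 0 := by rw [abs_lt] at hk; omega
    rw [hk0]
    apply fcoef_zero
    rw [intervalIntegral.integral_ofReal, hz_P1, Complex.ofReal_zero]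
  have hs1 := spec_ineq 1 le_rfl p P1 hdp hcp hcP1 hperp hperP1 hvan_p
  have hs2 := spec_ineq 1 le_rfl P1 P2 hdP1 hcP1 hcP2 hperP1 hperP2 hvan_P1
  have hvan_q1 : ∀ k : ℤ, |k| < ((n+1 : ℕ):ℤ) → fcoef (fun x => ((deriv q x : ℝ) : ℂ)) k = 0 := by
    intro k hk
    rcases eq_or_ne k 0 with h0 | h0
    · rw [h0]
      apply fcoef_zero
      rw [intervalIntegral.integral_ofReal]
      rw [intervalIntegral.integral_eq_sub_of_hasDerivAt (fun x _ => hdq x)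
        (hq1c.intervalIntegrable _ _)]
      rw [← hperq]
      simp
    · rw [fcoef_deriv (fun x => (q x:ℂ)) (fun x => ((deriv q x : ℝ):ℂ)) (fun x => (hdq x).ofReal_comp)
        (Complex.continuous_ofReal.comp hq1c) (by simp [hperq]) k h0]
      have hq0 : fcoef (fun x => (q x:ℂ)) k = 0 := by
        rw [fcoef_eq_exp_integral, hhigh k (by push_cast at hk ⊢; omega), mul_zero]
      rw [hq0, mul_zero]
  have hs3 := spec_ineq (n+1) (by omega) (deriv q) (iteratedDeriv 2 q) hdq1 hq1c hq2c
    hperq1 hperq2 hvan_q1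
  -- L2 norm inequalities
  have hNp : L2norm p ≤ L2norm P2 := by
    unfold L2norm
    apply Real.sqrt_le_sqrt
    simp only [Nat.cast_one, one_pow, one_mul] at hs1 hs2
    linarith [hs1, hs2]
  have hNP1 : L2norm P1 ≤ L2norm P2 := by
    unfold L2norm
    apply Real.sqrt_le_sqrt
    simp only [Nat.cast_one, one_pow, one_mul] at hs2
    linarith [hs2]
  have hn0 : (0:ℝ) < (n:ℝ) := by exact_mod_cast hn
  have hNq : L2norm (deriv q) ≤ (1/(n:ℝ)) * L2norm (iteratedDeriv 2 q) := by
    have hq10 : (0:ℝ) ≤ ∫ x in (0:ℝ)..(2*Real.pi), (deriv q x)^2 :=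
      intervalIntegral.integral_nonneg two_pi_pos'.le (fun x _ => by positivity)
    have h1 : (n:ℝ)^2 * (∫ x in (0:ℝ)..(2*Real.pi), (deriv q x)^2)
        ≤ ∫ x in (0:ℝ)..(2*Real.pi), (iteratedDeriv 2 q x)^2 := by
      push_cast at hs3
      have hx : (0:ℝ) ≤ (2*(n:ℝ)+1) * ∫ x in (0:ℝ)..(2*Real.pi), (deriv q x)^2 :=
        mul_nonneg (by positivity) hq10
      nlinarith [hs3, hx]
    have h2 : (∫ x in (0:ℝ)..(2*Real.pi), (deriv q x)^2)
        ≤ (∫ x in (0:ℝ)..(2*Real.pi), (iteratedDeriv 2 q x)^2) / (n:ℝ)^2 := by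
      rw [le_div_iff₀ (by positivity)]
      calc (∫ x in (0:ℝ)..(2*Real.pi), (deriv q x)^2) * (n:ℝ)^2
          = (n:ℝ)^2 * ∫ x in (0:ℝ)..(2*Real.pi), (deriv q x)^2 := mul_comm _ _
        _ ≤ _ := h1
    unfold L2norm
    calc Real.sqrt (∫ x in (0:ℝ)..(2*Real.pi), (deriv q x)^2)
        ≤ Real.sqrt ((∫ x in (0:ℝ)..(2*Real.pi), (iteratedDeriv 2 q x)^2) / (n:ℝ)^2) :=
          Real.sqrt_le_sqrt h2
      _ = (1/(n:ℝ)) * Real.sqrt (∫ x in (0:ℝ)..(2*Real.pi), (iteratedDeriv 2 q x)^2) := by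
          rw [Real.sqrt_div' _ (by positivity : (0:ℝ) ≤ (n:ℝ)^2), Real.sqrt_sq hn0.le]
          ring
  -- final assembly
  have hM3 : 0 ≤ supNorm (iteratedDeriv 3 φ) := supNorm_nonneg _ hφ3c
  have hM2 : 0 ≤ supNorm (iteratedDeriv 2 φ) := supNorm_nonneg _ hφ2c
  have hM1 : 0 ≤ supNorm (deriv φ) := supNorm_nonneg _ hφ1c
  have hNq1_0 : 0 ≤ L2norm (deriv q) := L2norm_nonneg _
  have hNP2_0 : 0 ≤ L2norm P2 := L2norm_nonneg _
  have hNp_0 : 0 ≤ L2norm p := L2norm_nonneg _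
  have hNP1_0 : 0 ≤ L2norm P1 := L2norm_nonneg _
  set R : ℝ := L2norm P2 * ((1/(n:ℝ)) * L2norm (iteratedDeriv 2 q)) with hR
  have hB1 : L2norm p * L2norm (deriv q) ≤ R :=
    mul_le_mul hNp hNq hNq1_0 hNP2_0
  have hB2 : L2norm P1 * L2norm (deriv q) ≤ R :=
    mul_le_mul hNP1 hNq hNq1_0 hNP2_0
  have hB3 : L2norm P2 * L2norm (deriv q) ≤ R :=
    mul_le_mul le_rfl hNq hNq1_0 hNP2_0
  have hA : (∫ x in (0:ℝ)..(2*Real.pi), iteratedDeriv 3 φ x * p x * deriv q x)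
      ≤ supNorm (iteratedDeriv 3 φ) * R :=
    le_trans T1 (mul_le_mul_of_nonneg_left hB1 hM3)
  have hB : (∫ x in (0:ℝ)..(2*Real.pi), iteratedDeriv 2 φ x * P1 x * deriv q x)
      ≤ supNorm (iteratedDeriv 2 φ) * R :=
    le_trans T2 (mul_le_mul_of_nonneg_left hB2 hM2)
  have hC : (∫ x in (0:ℝ)..(2*Real.pi), deriv φ x * P2 x * deriv q x)
      ≤ supNorm (deriv φ) * R :=
    le_trans T3 (mul_le_mul_of_nonneg_left hB3 hM1)
  rw [hLHS, hsplit2, i2p]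
  have hgoal : (2 * supNorm (iteratedDeriv 3 φ) + 4 * supNorm (iteratedDeriv 2 φ)
      + 2 * supNorm (deriv φ)) * (1/(n:ℝ)) * L2norm (iteratedDeriv 2 q) * L2norm P2
      = 2 * (supNorm (iteratedDeriv 3 φ) * R) + 4 * (supNorm (iteratedDeriv 2 φ) * R)
        + 2 * (supNorm (deriv φ) * R) := by
    rw [hR]; ring
  rw [hgoal]
  linarith [hA, hB, hC]
end
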